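/- arXiv:2404.08776 — 2 statements merged into one kernel-verified Lean document; each statement's English description precedes it below -/
import Mathlib

section
/- Let F be a positive CNF formula with k variables and n ≥ 1 clauses (each clause a nonempty subset of the variables), where k is even and k ≥ 1. Then the connected domination number of G_F satisfies γ_c(G_F) = 3k + 3n + 8. -/
namespace CDG

/-- Vertices of the graph `B`. -/
inductive BVert : Type
  | a | e | b | b' | h | k | f1 | g1 | f2 | g2

/-- The edges of the graph `B`. -/
def BRel : BVert → BVert → Prop
  | .a, .e => True
  | .e, .b => True
  | .b, .b' => True
  | .a, .h => True
  | .h, .e => True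
  | .e, .f1 => True
  | .f1, .b => True
  | .b, .f2 => True
  | .f2, .e => True
  | .e, .g1 => True
  | .g1, .f1 => True
  | .e, .g2 => True
  | .g2, .f2 => True
  | .h, .k => True
  | .k, .a => True
  | _, _ => False

/-- The graph `B`. -/
def graphB : SimpleGraph BVert := SimpleGraph.fromRel BRel

/-- `S` is a connected dominating set of `G`: every vertex is in `S` or adjacent to a
vertex of `S`, and the subgraph induced by `S` is connected. -/
def IsConnDomSet {V : Type*} (G : SimpleGraph V) (S : Set V) : Prop :=
  (∀ v : V, v ∈ S ∨ ∃ u ∈ S, G.Adj u v) ∧ (G.induce S).Connected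

/-- The connected domination number of `G`. -/
noncomputable def connDomNum {V : Type*} (G : SimpleGraph V) : ℕ :=
  sInf {m | ∃ S : Set V, IsConnDomSet G S ∧ S.ncard = m}

/-- Vertices of the graph `H n`: `u i` is `u_i` for `0 ≤ i ≤ n+1`, `x t` is `x_{t+1}` and
`y t` is `y_{t+1}` for `0 ≤ t ≤ n-2`. -/
inductive HVert (n : ℕ) : Type
  | u : Fin (n + 2) → HVert n
  | x : Fin (n - 1) → HVert n
  | y : Fin (n - 1) → HVert n

/-- The edges of the graph `H n`. -/
def HRel (n : ℕ) : HVert n → HVert n → Prop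
  | .u i, .u j => (j : ℕ) = (i : ℕ) + 1
  | .u i, .x t => (i : ℕ) = (t : ℕ) + 1 ∨ (i : ℕ) = (t : ℕ) + 2
  | .x t, .y s => t = s
  | .y s, .u i => (i : ℕ) = (s : ℕ) + 2
  | _, _ => False

/-- The graph `H n`. -/
def graphH (n : ℕ) : SimpleGraph (HVert n) := SimpleGraph.fromRel (HRel n)

/-- Vertices of the graph `C m`: `cc i` is `c^{i+1}` and `dd i` is `d^{i+1}` for `0 ≤ i ≤ m-1`. -/
inductive CVert (m : ℕ) : Type
  | c : CVert m
  | d : CVert m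
  | cc : Fin m → CVert m
  | dd : Fin m → CVert m

/-- The edges of the graph `C m`. -/
def CRel (m : ℕ) : CVert m → CVert m → Prop
  | .c, .d => True
  | .c, .dd _ => True
  | .cc i, .dd j => i = j
  | _, _ => False

/-- The graph `C m`. -/
def graphC (m : ℕ) : SimpleGraph (CVert m) := SimpleGraph.fromRel (CRel m)

/-- Vertices of the graph `A`. -/
inductive AVert : Type
  | p1 | p2 | p3 | q1 | q2 | r1 | r2

/-- The edges of the graph `A`. -/
def ARel : AVert → AVert → Prop
  | .p1, .p2 => True
  | .p2, .p3 => True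
  | .p1, .q1 => True
  | .q1, .r1 => True
  | .p2, .q1 => True
  | .p2, .r1 => True
  | .p2, .q2 => True
  | .q2, .r2 => True
  | .p3, .q2 => True
  | .p3, .r2 => True
  | _, _ => False

/-- Vertices of the graph `G_F`, for a formula with `k` variables and `n` clauses:
`k` copies of `B`, `n` copies of `C n`, one copy of `H (2n+7)`, and a copy of `A`
exactly when `k` is odd (realized as `AVert × Fin (k % 2)`). -/
abbrev GVert (k n : ℕ) : Type :=
  (Fin k × BVert) ⊕ (Fin n × CVert n) ⊕ HVert (2 * n + 7) ⊕ (AVert × Fin (k % 2))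

/-- The edges of the graph `G_F`, where the formula `F` assigns to each clause `j`
the (nonempty) set of variables appearing in it. -/
def GRel (k n : ℕ) (F : Fin n → Finset (Fin k)) : GVert k n → GVert k n → Prop
  | .inl (i, v), .inl (i', w) => i = i' ∧ BRel v w
  | .inr (.inl (j, v)), .inr (.inl (j', w)) => j = j' ∧ CRel n v w
  | .inr (.inr (.inl v)), .inr (.inr (.inl w)) => HRel (2 * n + 7) v w
  | .inr (.inr (.inr (v, _))), .inr (.inr (.inr (w, _))) => ARel v w
  | .inr (.inl (j, v)), .inl (i, w) =>
      i ∈ F j ∧ w = .a ∧ (v = .c ∨ ∃ t, v = .cc t)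
  | .inr (.inr (.inl v)), .inl (i, w) =>
      v = .u ⟨0, by omega⟩ ∧ (w = .a ∨ w = .b)
  | .inr (.inr (.inr (v, _))), .inr (.inr (.inl w)) =>
      v = .p1 ∧ w = .u ⟨0, by omega⟩
  | _, _ => False

/-- The graph `G_F`. -/
def graphGF (k n : ℕ) (F : Fin n → Finset (Fin k)) : SimpleGraph (GVert k n) :=
  SimpleGraph.fromRel (GRel k n F)

/-- Vertices of the graph `G'_F`, for a formula with `k` variables and `n` clauses:
`k` copies of `B`, `n` copies of `C n`, one copy of `H 6`, and a copy of `A`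
exactly when `k` is odd (realized as `AVert × Fin (k % 2)`). -/
abbrev GVert' (k n : ℕ) : Type :=
  (Fin k × BVert) ⊕ (Fin n × CVert n) ⊕ HVert 6 ⊕ (AVert × Fin (k % 2))

/-- The edges of the graph `G'_F`. -/
def GRel' (k n : ℕ) (F : Fin n → Finset (Fin k)) : GVert' k n → GVert' k n → Prop
  | .inl (i, v), .inl (i', w) => i = i' ∧ BRel v w
  | .inr (.inl (j, v)), .inr (.inl (j', w)) => j = j' ∧ CRel n v w
  | .inr (.inr (.inl v)), .inr (.inr (.inl w)) => HRel 6 v w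
  | .inr (.inr (.inr (v, _))), .inr (.inr (.inr (w, _))) => ARel v w
  | .inr (.inl (j, v)), .inl (i, w) =>
      i ∈ F j ∧ w = .a ∧ (v = .c ∨ ∃ t, v = .cc t)
  | .inr (.inr (.inl v)), .inl (i, w) =>
      v = .u ⟨7, by omega⟩ ∧ (w = .a ∨ w = .b)
  | .inr (.inr (.inr (v, _))), .inr (.inr (.inl w)) =>
      v = .p1 ∧ w = .u ⟨7, by omega⟩
  | _, _ => False

/-- The graph `G'_F`. -/
def graphGF' (k n : ℕ) (F : Fin n → Finset (Fin k)) : SimpleGraph (GVert' k n) :=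
  SimpleGraph.fromRel (GRel' k n F)

/-!
Every connected dominating set meets each of `3k + 3n + 8` pairwise disjoint vertex classes.
Most classes contain the closed neighbourhood of a vertex (`k_i`, `b'_i`, `g¹_i`, `d_j`, `y_i`),
so domination alone forces a vertex of the class into the set. The two remaining classes are
`{u_0}` and `{u_1}`: the set must contain vertices both inside and outside `H`, and every edge
entering `H` (resp. `H - u_0`) ends at `u_0` (resp. `u_1`), so connectivity forces both in.
Conversely, `a_i, e_i, b_i` for every variable, `c_j` for every clause and `u_0, …, u_{2n+7}`
form a connected dominating set with one vertex in each class; since `k` is even there is no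
copy of `A` left to dominate.
-/

instance : Finite BVert :=
  Finite.of_surjective ![.a, .e, .b, .b', .h, .k, .f1, .g1, .f2, .g2] fun v => by
    cases v <;> simp [Fin.exists_fin_succ]

instance : Finite AVert :=
  Finite.of_surjective ![.p1, .p2, .p3, .q1, .q2, .r1, .r2] fun v => by
    cases v <;> simp [Fin.exists_fin_succ]

deriving instance Fintype for CVert
deriving instance Fintype for HVert

section ConnDomSet

variable {V : Type*} {G : SimpleGraph V} {S : Set V}

theorem IsConnDomSet.connDomNum_eq (hS : IsConnDomSet G S)
    (hmin : ∀ T, IsConnDomSet G T → S.ncard ≤ T.ncard) : connDomNum G = S.ncard :=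
  le_antisymm (Nat.sInf_le ⟨S, hS, rfl⟩)
    (le_csInf ⟨_, S, hS, rfl⟩ fun _ ⟨T, hT, hTm⟩ => hTm ▸ hmin T hT)

theorem IsConnDomSet.exists_mem_eq_of_forall_adj {α : Type*} (hS : IsConnDomSet G S)
    (f : V → α) {w : V} (hw : ∀ v, G.Adj v w → f v = f w) : ∃ v ∈ S, f v = f w := by
  rcases hS.1 w with h | ⟨v, hv, hvw⟩
  exacts [⟨w, h, rfl⟩, ⟨v, hv, hw v hvw⟩]

theorem mem_of_induce_connected_of_forall_adj_eq {P : Set V} {c x y : V}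
    (hS : (G.induce S).Connected) (hx : x ∈ S) (hxP : x ∉ P) (hy : y ∈ S) (hyP : y ∈ P)
    (hc : ∀ v w, G.Adj v w → v ∉ P → w ∈ P → w = c) : c ∈ S := by
  obtain ⟨p⟩ := hS.preconnected ⟨y, hy⟩ ⟨x, hx⟩
  obtain ⟨d, -, hd₁, hd₂⟩ := p.exists_boundary_dart {z | z.1 ∈ P} hyP hxP
  exact hc _ _ d.adj.symm hd₂ hd₁ ▸ d.fst.2

theorem card_le_ncard_of_forall_exists_eq_some [Finite V] {α : Type*} (f : V → Option α)
    (h : ∀ a, ∃ v ∈ S, f v = some a) : Nat.card α ≤ S.ncard :=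
  calc Nat.card α = (Set.range (some : α → Option α)).ncard :=
        (Set.ncard_range_of_injective (Option.some_injective α)).symm
    _ ≤ (f '' S).ncard := Set.ncard_le_ncard (by
        rintro _ ⟨a, rfl⟩
        exact h a)
    _ ≤ S.ncard := Set.ncard_image_le

end ConnDomSet

/-- The classes are indexed by `Label k n`: three per copy of `B`, one per copy of `C n` and
`2n + 8` in `H`, where `x_i, y_i, u_{i+1}` share a class and `u_{2n+8}` joins that of `u_{2n+7}`. -/
abbrev Label (k n : ℕ) : Type := (Fin k × Fin 3) ⊕ Fin n ⊕ Fin (2 * n + 8)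

def bLabel : BVert → Option (Fin 3)
  | .h | .k | .a => some 0
  | .b | .b' => some 1
  | .g1 | .e | .f1 => some 2
  | _ => none

def hLabel {N : ℕ} : HVert N → Fin (N + 1)
  | .u t => ⟨min t N, by omega⟩
  | .x s | .y s => ⟨s + 2, by omega⟩

def label {k n : ℕ} : GVert k n → Option (Label k n)
  | .inl (i, w) => (bLabel w).map fun r => .inl (i, r)
  | .inr (.inl (j, .c)) | .inr (.inl (j, .d)) => some (.inr (.inl j))
  | .inr (.inr (.inl w)) => some (.inr (.inr (hLabel w)))
  | _ => none

def canonical {k n : ℕ} : Label k n → GVert k n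
  | .inl (i, r) => .inl (i, ![.a, .b, .e] r)
  | .inr (.inl j) => .inr (.inl (j, .c))
  | .inr (.inr t) => .inr (.inr (.inl (.u t.castSucc)))

section GraphGF

variable {k n : ℕ} {F : Fin n → Finset (Fin k)}

theorem card_label : Nat.card (Label k n) = 3 * k + 3 * n + 8 := by
  simp only [Nat.card_eq_fintype_card, Fintype.card_sum, Fintype.card_prod, Fintype.card_fin]
  ring

theorem label_canonical (t : Label k n) : label (canonical t) = some t := by
  rcases t with ⟨i, r⟩ | j | t
  · fin_cases r <;> rfl
  · rfl
  · simp only [canonical, label, hLabel, Fin.val_castSucc, min_eq_left (Nat.le_of_lt_succ t.isLt)]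

theorem ncard_range_canonical :
    (Set.range (canonical : Label k n → GVert k n)).ncard = 3 * k + 3 * n + 8 := by
  have hinj : Function.Injective (canonical : Label k n → GVert k n) :=
    Function.LeftInverse.injective (g := fun v => (label v).getD (.inr (.inr 0)))
      fun t => by simp [label_canonical]
  rw [Set.ncard_range_of_injective hinj, card_label]

theorem adj_u_succ {m : ℕ} (hm : m + 1 < 2 * n + 9) :
    (graphGF k n F).Adj (.inr (.inr (.inl (.u ⟨m, by omega⟩))))
      (.inr (.inr (.inl (.u ⟨m + 1, hm⟩)))) := by
  simp [graphGF, GRel, HRel]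

theorem exists_canonical_eq_or_adj (hkeven : Even k) (hF : ∀ j, (F j).Nonempty)
    (v : GVert k n) : ∃ t, canonical t = v ∨ (graphGF k n F).Adj (canonical t) v := by
  rcases v with ⟨i, w⟩ | ⟨⟨j, w⟩ | w | ⟨-, z⟩⟩
  · cases w <;> first
      | (refine ⟨.inl (i, 0), ?_⟩; simp [canonical, graphGF, GRel, BRel]; done)
      | (refine ⟨.inl (i, 1), ?_⟩; simp [canonical, graphGF, GRel, BRel]; done)
      | (refine ⟨.inl (i, 2), ?_⟩; simp [canonical, graphGF, GRel, BRel])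
  · cases w with
    | cc t =>
      obtain ⟨i, hi⟩ := hF j
      exact ⟨.inl (i, 0), by simp [canonical, graphGF, GRel, hi]⟩
    | _ => exact ⟨.inr (.inl j), by simp [canonical, graphGF, GRel, CRel]⟩
  · cases w with
    | u t =>
      obtain ⟨t, ht⟩ := t
      by_cases ht' : t ≤ 2 * n + 7
      · exact ⟨.inr (.inr ⟨t, by omega⟩), Or.inl rfl⟩
      · obtain rfl : t = 2 * n + 8 := by omega
        exact ⟨.inr (.inr (Fin.last _)), Or.inr (adj_u_succ ht)⟩
    | x s => exact ⟨.inr (.inr ⟨s + 1, by omega⟩), by simp [canonical, graphGF, GRel, HRel]⟩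
    | y s => exact ⟨.inr (.inr ⟨s + 2, by omega⟩), by simp [canonical, graphGF, GRel, HRel]⟩
  · exact absurd z.isLt (by simp [Nat.even_iff.mp hkeven])

theorem induce_range_canonical_connected (hF : ∀ j, (F j).Nonempty) :
    ((graphGF k n F).induce (Set.range (canonical : Label k n → GVert k n))).Connected := by
  set D := Set.range (canonical : Label k n → GVert k n)
  let c (t : Label k n) : D := ⟨canonical t, t, rfl⟩
  have hadj : ∀ s t, (graphGF k n F).Adj (canonical s) (canonical t) →
      ((graphGF k n F).induce D).Reachable (c s) (c t) :=
    fun s t h => SimpleGraph.Adj.reachable (by exact h)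
  have hu : ∀ m : Fin (2 * n + 8),
      ((graphGF k n F).induce D).Reachable (c (.inr (.inr 0))) (c (.inr (.inr m))) := by
    rintro ⟨m, hm⟩
    induction m with
    | zero => rfl
    | succ m ih => exact (ih (by omega)).trans (hadj _ _ (adj_u_succ (by omega)))
  have ha : ∀ i, ((graphGF k n F).induce D).Reachable (c (.inr (.inr 0))) (c (.inl (i, 0))) :=
    fun i => hadj _ _ (by simp [canonical, graphGF, GRel])
  refine (SimpleGraph.connected_iff_exists_forall_reachable _).2 ⟨c (.inr (.inr 0)), ?_⟩
  rintro ⟨_, (⟨i, r⟩ | j | m), rfl⟩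
  · fin_cases r
    · exact ha i
    · exact hadj _ _ (by simp [canonical, graphGF, GRel])
    · exact (ha i).trans (hadj _ _ (by simp [canonical, graphGF, GRel, BRel]))
  · obtain ⟨i, hi⟩ := hF j
    exact (ha i).trans (hadj _ _ (by simp [canonical, graphGF, GRel, hi]))
  · exact hu m

theorem isConnDomSet_range_canonical (hkeven : Even k) (hF : ∀ j, (F j).Nonempty) :
    IsConnDomSet (graphGF k n F) (Set.range canonical) := by
  refine ⟨fun v => ?_, induce_range_canonical_connected hF⟩
  obtain ⟨t, rfl | h⟩ := exists_canonical_eq_or_adj hkeven hF v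
  exacts [Or.inl ⟨t, rfl⟩, Or.inr ⟨_, ⟨t, rfl⟩, h⟩]

theorem label_eq_of_adj_inl {i : Fin k} {w : BVert} {v : GVert k n}
    (hw : w = .k ∨ w = .b' ∨ w = .g1) (h : (graphGF k n F).Adj v (.inl (i, w))) :
    label v = label (.inl (i, w)) := by
  rcases hw with rfl | rfl | rfl <;>
  rcases v with ⟨i', w'⟩ | ⟨⟨j', w'⟩ | w' | w'⟩ <;>
  cases w' <;> simp_all [graphGF, GRel, BRel, label, bLabel]

theorem label_eq_of_adj_d {j : Fin n} {v : GVert k n}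
    (h : (graphGF k n F).Adj v (.inr (.inl (j, .d)))) :
    label v = label (.inr (.inl (j, .d)) : GVert k n) := by
  rcases v with ⟨i', w'⟩ | ⟨⟨j', w'⟩ | w' | w'⟩ <;>
  cases w' <;> simp_all [graphGF, GRel, CRel, label]

theorem label_eq_of_adj_y {s : Fin (2 * n + 7 - 1)} {v : GVert k n}
    (h : (graphGF k n F).Adj v (.inr (.inr (.inl (.y s))))) :
    label v = label (.inr (.inr (.inl (.y s))) : GVert k n) := by
  rcases v with ⟨i', w'⟩ | ⟨⟨j', w'⟩ | w' | w'⟩ <;>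
  cases w' <;> simp_all [graphGF, GRel, HRel, label, hLabel, Fin.ext_iff]
  omega

def hPart : Set (GVert k n) := Set.range fun w => .inr (.inr (.inl w))

theorem mem_hPart_of_label_eq {v : GVert k n} {m : Fin (2 * n + 8)}
    (h : label v = some (.inr (.inr m))) : v ∈ hPart := by
  rcases v with ⟨i, w⟩ | ⟨⟨j, w⟩ | w | w⟩
  · simp [label] at h
  · cases w <;> simp [label] at h
  · exact ⟨w, rfl⟩
  · simp [label] at h

theorem eq_u_zero_of_adj {v : GVert k n} {w : HVert (2 * n + 7)} (hv : v ∉ hPart)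
    (h : (graphGF k n F).Adj v (.inr (.inr (.inl w)))) : w = .u 0 := by
  simp only [graphGF, SimpleGraph.fromRel_adj] at h
  rcases v with ⟨i', w'⟩ | ⟨⟨j', w'⟩ | w' | w'⟩ <;> simp_all [GRel, hPart]

theorem eq_u_one_of_adj_u_zero {w : HVert (2 * n + 7)}
    (h : (graphGF k n F).Adj (.inr (.inr (.inl (.u 0)))) (.inr (.inr (.inl w)))) :
    w = .u 1 := by
  simp only [graphGF, SimpleGraph.fromRel_adj, GRel] at h
  cases w with
  | u t =>
    simp only [HRel, Fin.val_zero] at h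
    exact congrArg _ (Fin.ext (by rw [Fin.val_one]; omega))
  | x s | y s => simp [HRel] at h

theorem u_zero_mem_and_u_one_mem {S : Set (GVert k n)}
    (hS : ((graphGF k n F).induce S).Connected) {x y : GVert k n} (hx : x ∈ S)
    (hxH : x ∉ hPart) (hy : y ∈ S) (hyH : y ∈ hPart) (hy0 : y ≠ .inr (.inr (.inl (.u 0)))) :
    .inr (.inr (.inl (.u 0))) ∈ S ∧ .inr (.inr (.inl (.u 1))) ∈ S := by
  refine ⟨mem_of_induce_connected_of_forall_adj_eq hS hx hxH hy hyH ?_,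
    mem_of_induce_connected_of_forall_adj_eq (P := hPart \ {.inr (.inr (.inl (.u 0)))}) hS hx
      (fun h => hxH h.1) hy ⟨hyH, hy0⟩ ?_⟩
  · rintro v _ hvw hv ⟨w, rfl⟩
    rw [eq_u_zero_of_adj hv hvw]
  · rintro v _ hvw hv ⟨⟨w, rfl⟩, hw0⟩
    by_cases hvH : v ∈ hPart
    · obtain rfl : v = .inr (.inr (.inl (.u 0))) := by
        by_contra hv0
        exact hv ⟨hvH, hv0⟩
      rw [eq_u_one_of_adj_u_zero hvw]
    · exact (hw0 (by rw [eq_u_zero_of_adj hvH hvw]; rfl)).elim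

theorem exists_mem_label_eq_inl {S : Set (GVert k n)} (hS : IsConnDomSet (graphGF k n F) S)
    (i : Fin k) (r : Fin 3) : ∃ v ∈ S, label v = some (.inl (i, r)) := by
  fin_cases r
  · exact hS.exists_mem_eq_of_forall_adj label (w := .inl (i, .k))
      fun v h => label_eq_of_adj_inl (by simp) h
  · exact hS.exists_mem_eq_of_forall_adj label (w := .inl (i, .b'))
      fun v h => label_eq_of_adj_inl (by simp) h
  · exact hS.exists_mem_eq_of_forall_adj label (w := .inl (i, .g1))
      fun v h => label_eq_of_adj_inl (by simp) h

theorem exists_mem_label_eq_of_two_le {S : Set (GVert k n)}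
    (hS : IsConnDomSet (graphGF k n F) S) (m : Fin (2 * n + 8)) (hm : 2 ≤ (m : ℕ)) :
    ∃ v ∈ S, label v = some (.inr (.inr m)) := by
  obtain ⟨v, hv, hvm⟩ := hS.exists_mem_eq_of_forall_adj label
    (w := .inr (.inr (.inl (.y ⟨m - 2, by omega⟩)))) fun v h => label_eq_of_adj_y h
  refine ⟨v, hv, hvm.trans ?_⟩
  simp only [label, hLabel, Option.some.injEq, Sum.inr.injEq, Fin.ext_iff]
  omega

theorem exists_mem_label_eq (hk : 1 ≤ k) {S : Set (GVert k n)}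
    (hS : IsConnDomSet (graphGF k n F) S) (t : Label k n) : ∃ v ∈ S, label v = some t := by
  have hu : .inr (.inr (.inl (.u 0))) ∈ S ∧ .inr (.inr (.inl (.u 1))) ∈ S := by
    obtain ⟨x, hx, hxl⟩ := exists_mem_label_eq_inl hS ⟨0, hk⟩ 0
    obtain ⟨y, hy, hyl⟩ := exists_mem_label_eq_of_two_le hS ⟨2, by omega⟩ le_rfl
    refine u_zero_mem_and_u_one_mem hS.2 hx ?_ hy ?_ ?_
    · rintro ⟨w, rfl⟩
      simp [label] at hxl
    · exact mem_hPart_of_label_eq hyl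
    · rintro rfl
      simp [label, hLabel, Fin.ext_iff] at hyl
  rcases t with ⟨i, r⟩ | j | m
  · exact exists_mem_label_eq_inl hS i r
  · exact hS.exists_mem_eq_of_forall_adj label fun v h => label_eq_of_adj_d h
  · by_cases hm : 2 ≤ (m : ℕ)
    · exact exists_mem_label_eq_of_two_le hS m hm
    · obtain ⟨m, hm'⟩ := m
      interval_cases m
      exacts [⟨_, hu.1, rfl⟩, ⟨_, hu.2, rfl⟩]

theorem le_ncard_of_isConnDomSet (hk : 1 ≤ k) {S : Set (GVert k n)}
    (hS : IsConnDomSet (graphGF k n F) S) : 3 * k + 3 * n + 8 ≤ S.ncard :=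
  card_label (k := k) (n := n) ▸
    card_le_ncard_of_forall_exists_eq_some label (exists_mem_label_eq hk hS)

end GraphGF

theorem connDomNum_graphGF_of_even_general (k n : ℕ) (hk : 1 ≤ k) (hkeven : Even k)
    (F : Fin n → Finset (Fin k)) (hF : ∀ j, (F j).Nonempty) :
    connDomNum (graphGF k n F) = 3 * k + 3 * n + 8 := by
  have hD := isConnDomSet_range_canonical hkeven hF
  rw [hD.connDomNum_eq fun S hS => ncard_range_canonical ▸ le_ncard_of_isConnDomSet hk hS,
    ncard_range_canonical]

theorem connDomNum_graphGF_of_even (k n : ℕ) (hk : 1 ≤ k) (hkeven : Even k)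
    (hn : 1 ≤ n) (F : Fin n → Finset (Fin k)) (hF : ∀ j, (F j).Nonempty) :
    connDomNum (graphGF k n F) = 3 * k + 3 * n + 8 :=
  connDomNum_graphGF_of_even_general k n hk hkeven F hF

end CDG
end

section
/- Let F be a positive CNF formula with k ≥ 1 variables and n ≥ 1 clauses (each clause a nonempty subset of the variables). Then every connected dominating set S of G_F contains the vertex u_0 and satisfies |S ∩ V(H_{2n+7})| ≥ 2n + 8, where V(H_{2n+7}) denotes the vertex set of the copy of H_{2n+7} in G_F. -/
/-!
Give the vertices outside the copy of `H` level `0`, and `u_i` level `i + 1` (with `x_i`, `y_i`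
in between). Since `u_0` is the only vertex of `H` with neighbours outside `H`, adjacent vertices
have levels differing by at most one. A connected dominating set `S` contains a vertex of level at
most `1` (dominating the vertex `k` of `B_1`) and one of level at least `2n + 8` (dominating
`u_{2n+8}`), so a path inside `S` between them meets every level `1, …, 2n + 8`: these are
`2n + 8` distinct vertices of `H`, and the only vertex of level `1` is `u_0`.
-/

namespace SimpleGraph

variable {V : Type*} {G : SimpleGraph V} {S : Set V} {f : V → ℕ}

theorem exists_mem_le_add_one_of_dominating (hf : ∀ ⦃a b⦄, G.Adj a b → f b ≤ f a + 1)
    (hS : ∀ v, v ∈ S ∨ ∃ u ∈ S, G.Adj u v) (z : V) :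
    ∃ v ∈ S, f z ≤ f v + 1 ∧ f v ≤ f z + 1 := by
  rcases hS z with hz | ⟨v, hv, hvz⟩
  · exact ⟨z, hz, by omega, by omega⟩
  · exact ⟨v, hv, hf hvz, hf hvz.symm⟩

theorem exists_mem_eq_of_induce_preconnected (hf : ∀ ⦃a b⦄, G.Adj a b → f b ≤ f a + 1)
    (hS : (G.induce S).Preconnected) {a b : V} (ha : a ∈ S) (hb : b ∈ S) {c : ℕ}
    (hac : f a ≤ c) (hcb : c ≤ f b) : ∃ v ∈ S, f v = c := by
  rcases hac.eq_or_lt with rfl | hac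
  · exact ⟨a, ha, rfl⟩
  obtain ⟨p⟩ := hS ⟨a, ha⟩ ⟨b, hb⟩
  obtain ⟨d, -, hd₁, hd₂⟩ :=
    p.exists_boundary_dart {v | f v.1 < c} hac (by simpa using hcb)
  have hstep : f d.snd.1 ≤ f d.fst.1 + 1 := hf d.adj
  simp only [Set.mem_ofPred_eq, not_lt] at hd₁ hd₂
  exact ⟨d.snd.1, d.snd.2, by omega⟩

end SimpleGraph

namespace CDG

instance {m : ℕ} : Finite (HVert m) :=
  Finite.of_surjective
    (fun v : Fin (m + 2) ⊕ Fin (m - 1) ⊕ Fin (m - 1) =>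
      v.elim HVert.u (Sum.elim HVert.x HVert.y))
    (by rintro (i | t | t); exacts [⟨.inl i, rfl⟩, ⟨.inr (.inl t), rfl⟩, ⟨.inr (.inr t), rfl⟩])

def HVert.depth {m : ℕ} : HVert m → ℕ
  | .u i => i
  | .x t => t + 1
  | .y t => t + 2

theorem HVert.depth_le_of_rel {m : ℕ} {v w : HVert m} (h : HRel m v w) :
    w.depth ≤ v.depth + 1 ∧ v.depth ≤ w.depth + 1 := by
  cases v <;> cases w <;> simp only [HRel] at h <;> simp only [HVert.depth] <;> omega

def level {k n : ℕ} : GVert k n → ℕ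
  | .inr (.inr (.inl w)) => w.depth + 1
  | _ => 0

variable {k n : ℕ} {F : Fin n → Finset (Fin k)}

theorem level_le_of_rel {a b : GVert k n} (h : GRel k n F a b) :
    level b ≤ level a + 1 ∧ level a ≤ level b + 1 := by
  rcases a with ⟨i, v⟩ | ⟨⟨j, v⟩ | v | ⟨v, z⟩⟩ <;>
    rcases b with ⟨i', w⟩ | ⟨⟨j', w⟩ | w | ⟨w, z'⟩⟩ <;>
    simp only [GRel] at h
  -- the edges between `H` and the rest of the graph all end at `u_0`, of level `1`
  all_goals first
    | exact h.elim
    | exact ⟨Nat.zero_le _, Nat.zero_le _⟩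
    | (have := HVert.depth_le_of_rel h; simp only [level]; omega)
    | (obtain ⟨-, rfl⟩ := h; constructor <;> simp [level, HVert.depth])
    | (obtain ⟨rfl, -⟩ := h; constructor <;> simp [level, HVert.depth])

theorem level_le_of_adj {a b : GVert k n} (h : (graphGF k n F).Adj a b) :
    level b ≤ level a + 1 := by
  rcases (SimpleGraph.fromRel_adj _ _ _).1 h with ⟨-, h | h⟩
  exacts [(level_le_of_rel h).1, (level_le_of_rel h).2]

theorem exists_H_vertex_eq_of_level_pos {v : GVert k n} (h : 0 < level v) :
    ∃ w : HVert (2 * n + 7), v = .inr (.inr (.inl w)) := by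
  rcases v with _ | _ | w | _ <;> first | exact ⟨w, rfl⟩ | simp [level] at h

theorem eq_u0_of_level_eq_one {v : GVert k n} (h : level v = 1) :
    v = .inr (.inr (.inl (.u ⟨0, by omega⟩))) := by
  obtain ⟨w, rfl⟩ := exists_H_vertex_eq_of_level_pos (h ▸ Nat.one_pos)
  cases w with
  | u i =>
    rw [show i = ⟨0, by omega⟩ from Fin.ext (by simpa [level, HVert.depth] using h)]
  | x t => simp [level, HVert.depth] at h
  | y t => simp [level, HVert.depth] at h

theorem connDomSet_contains_u0_and_many_H_vertices (k n : ℕ) (hk : 1 ≤ k)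
    (F : Fin n → Finset (Fin k))
    (S : Set (GVert k n)) (hS : IsConnDomSet (graphGF k n F) S) :
    (Sum.inr (Sum.inr (Sum.inl (HVert.u ⟨0, by omega⟩))) : GVert k n) ∈ S ∧
    2 * n + 8 ≤
      (S ∩ {v : GVert k n | ∃ w : HVert (2 * n + 7), v = .inr (.inr (.inl w))}).ncard := by
  obtain ⟨hdom, hconn⟩ := hS
  have hlip : ∀ ⦃a b⦄, (graphGF k n F).Adj a b → level b ≤ level a + 1 :=
    fun _ _ => level_le_of_adj
  obtain ⟨o, hoS, -, ho⟩ :=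
    SimpleGraph.exists_mem_le_add_one_of_dominating hlip hdom (.inl (⟨0, hk⟩, .k))
  obtain ⟨w, hwS, hw, -⟩ := SimpleGraph.exists_mem_le_add_one_of_dominating hlip hdom
    (.inr (.inr (.inl (.u ⟨2 * n + 8, by omega⟩))))
  have hw' : 2 * n + 8 ≤ level w := by
    change 2 * n + 9 ≤ level w + 1 at hw
    omega
  have hits : ∀ c ∈ Set.Icc 1 (2 * n + 8), ∃ v ∈ S, level v = c := fun c hc =>
    SimpleGraph.exists_mem_eq_of_induce_preconnected hlip hconn.preconnected hoS hwS
      (ho.trans hc.1) (hc.2.trans hw')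
  obtain ⟨u, huS, hu⟩ := hits 1 (by simp)
  refine ⟨eq_u0_of_level_eq_one hu ▸ huS, ?_⟩
  set T := S ∩ {v : GVert k n | ∃ w : HVert (2 * n + 7), v = .inr (.inr (.inl w))}
  have hT : T.Finite := (Set.finite_range (fun w => .inr (.inr (.inl w)))).subset
    (fun v hv => by obtain ⟨w, rfl⟩ := hv.2; exact ⟨w, rfl⟩)
  have hsub : Set.Icc 1 (2 * n + 8) ⊆ level '' T := fun c hc => by
    obtain ⟨v, hvS, rfl⟩ := hits c hc
    exact ⟨v, ⟨hvS, exists_H_vertex_eq_of_level_pos hc.1⟩, rfl⟩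
  calc 2 * n + 8 = (Set.Icc 1 (2 * n + 8)).ncard := by simp
    _ ≤ (level '' T).ncard := Set.ncard_le_ncard hsub (hT.image _)
    _ ≤ T.ncard := Set.ncard_image_le hT

end CDG
end
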